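/- Let γ > 1 and v₋ > 0, and let p(v) = v^{-γ}. There exists a constant C > 0 such that for all real numbers v, w with 0 < w < 2v₋ and 0 < v ≤ 3v₋, one has (v - w)² ≤ C · p(v|w). -/

import Mathlib

/-- Relative pressure inequality: for `γ > 1`, `v₋ > 0`, with `p(v) = v^(-γ)` and
`p(v|w) = v^(-γ) - w^(-γ) + γ w^(-γ-1)(v-w)`, there is `C > 0` with
`(v-w)² ≤ C p(v|w)` whenever `0 < w < 2v₋` and `0 < v ≤ 3v₋`. -/
theorem stmt_1 (γ vminus : ℝ) (hγ : 1 < γ) (hv : 0 < vminus) :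
    ∃ C > 0, ∀ v w : ℝ, 0 < w → w < 2 * vminus → 0 < v → v ≤ 3 * vminus →
      (v - w) ^ 2 ≤ C * (v ^ (-γ) - w ^ (-γ) + γ * w ^ (-γ - 1) * (v - w)) := by
  set M : ℝ := 3 * vminus with hM
  have hM0 : 0 < M := by positivity
  have hγ0 : 0 < γ := by linarith
  set c : ℝ := γ * (γ + 1) * M ^ (-γ - 2) / 2 with hc
  have hc0 : 0 < c := by
    have := Real.rpow_pos_of_pos hM0 (-γ - 2)
    positivity
  -- the auxiliary function and its derivatives
  set f : ℝ → ℝ := fun x => x ^ (-γ) - c * x ^ 2 with hf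
  set f' : ℝ → ℝ := fun x => -γ * x ^ (-γ - 1) - 2 * c * x with hf'
  set f'' : ℝ → ℝ := fun x => γ * (γ + 1) * x ^ (-γ - 2) - 2 * c with hf''
  have hd1 : ∀ x : ℝ, 0 < x → HasDerivAt f (f' x) x := by
    intro x hx
    have h1 : HasDerivAt (fun y : ℝ => y ^ (-γ)) (-γ * x ^ (-γ - 1)) x :=
      Real.hasDerivAt_rpow_const (Or.inl hx.ne')
    have h2 : HasDerivAt (fun y : ℝ => c * y ^ 2) (2 * c * x) x := by
      have := (hasDerivAt_pow 2 x).const_mul c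
      simpa [mul_comm, mul_assoc, mul_left_comm] using this
    simpa [hf, hf', Pi.sub_def] using h1.sub h2
  have hd2 : ∀ x : ℝ, 0 < x → HasDerivAt f' (f'' x) x := by
    intro x hx
    have h1 : HasDerivAt (fun y : ℝ => y ^ (-γ - 1)) ((-γ - 1) * x ^ (-γ - 1 - 1)) x :=
      Real.hasDerivAt_rpow_const (Or.inl hx.ne')
    have h1' : HasDerivAt (fun y : ℝ => -γ * y ^ (-γ - 1)) (-γ * ((-γ - 1) * x ^ (-γ - 1 - 1))) x :=
      h1.const_mul _
    have h2 : HasDerivAt (fun y : ℝ => 2 * c * y) (2 * c) x := by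
      simpa using (hasDerivAt_id x).const_mul (2 * c)
    have h3 := h1'.sub h2
    have he : -γ * ((-γ - 1) * x ^ (-γ - 1 - 1)) - 2 * c = f'' x := by
      have : -γ - 1 - 1 = -γ - 2 := by ring
      rw [this]; simp [hf'']; ring
    rw [he] at h3
    exact h3
  have hconv : ConvexOn ℝ (Set.Ioc 0 M) f := by
    apply convexOn_of_hasDerivWithinAt2_nonneg (f' := f') (f'' := f'') (convex_Ioc 0 M)
    · intro x hx
      have hx0 : (0 : ℝ) < x := hx.1
      exact ContinuousWithinAt.sub
        ((Real.continuousAt_rpow_const x (-γ) (Or.inl hx0.ne')).continuousWithinAt)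
        ((continuous_const.mul (continuous_pow 2)).continuousWithinAt)
    · intro x hx
      rw [interior_Ioc] at hx
      exact (hd1 x hx.1).hasDerivWithinAt
    · intro x hx
      rw [interior_Ioc] at hx
      exact (hd2 x hx.1).hasDerivWithinAt
    · intro x hx
      rw [interior_Ioc] at hx
      have hxM : x ≤ M := hx.2.le
      have hmono : M ^ (-γ - 2) ≤ x ^ (-γ - 2) :=
        Real.rpow_le_rpow_of_nonpos hx.1 hxM (by linarith)
      have : γ * (γ + 1) * M ^ (-γ - 2) ≤ γ * (γ + 1) * x ^ (-γ - 2) := by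
        apply mul_le_mul_of_nonneg_left hmono; positivity
      simp only [hf'']
      rw [hc]
      linarith
  refine ⟨c⁻¹, inv_pos.mpr hc0, fun v w hw0 hw2 hv0 hv3 => ?_⟩
  have hwM : w ∈ Set.Ioc 0 M := ⟨hw0, by rw [hM]; linarith⟩
  have hvM : v ∈ Set.Ioc 0 M := ⟨hv0, by rw [hM]; linarith⟩
  -- tangent line inequality:  f v ≥ f w + f' w * (v - w)
  have key : f w + f' w * (v - w) ≤ f v := by
    rcases lt_trichotomy w v with h | h | h
    · have hs := hconv.le_slope_of_hasDerivAt hwM hvM h (hd1 w hw0)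
      rw [slope_def_field] at hs
      have hvw : 0 < v - w := by linarith
      have := (le_div_iff₀ hvw).mp hs
      linarith
    · subst h; simp
    · have hs := hconv.slope_le_of_hasDerivAt hvM hwM h (hd1 w hw0)
      rw [slope_def_field] at hs
      have hvw : 0 < w - v := by linarith
      have := (div_le_iff₀ hvw).mp hs
      nlinarith
  have hP : c * (v - w) ^ 2 ≤ v ^ (-γ) - w ^ (-γ) + γ * w ^ (-γ - 1) * (v - w) := by
    simp only [hf, hf'] at key
    nlinarith [key]
  calc (v - w) ^ 2 = c⁻¹ * (c * (v - w) ^ 2) := by field_simp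
    _ ≤ c⁻¹ * (v ^ (-γ) - w ^ (-γ) + γ * w ^ (-γ - 1) * (v - w)) := by
        apply mul_le_mul_of_nonneg_left hP (le_of_lt (inv_pos.mpr hc0))
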